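/- Let F be a real Fréchet space whose topology is generated by a countable separating family of continuous seminorms (ρ_n)_{n∈ℕ}, and let (α_n)_{n∈ℕ} be a sequence of positive real numbers converging to 0. Then the function d(e,f) := sup_{n∈ℕ} α_n · ρ_n(e−f)/(1+ρ_n(e−f)) is a well-defined metric on F which is translation-invariant, induces the original topology of F, and has absolutely convex balls (every open ball centered at 0 is convex and balanced). -/

import Mathlib

/-!
The map `t ↦ t / (1 + t)` is increasing, subadditive and bounded by `1` on `[0, ∞)`, so
`N x = ⨆ n, α n * ρ n x / (1 + ρ n x)` is finite, symmetric and subadditive, and `d e f = N (e - f)`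
is a translation-invariant metric. `N` is monotone in each `ρ n` and every `ρ n` is convex, so
`N (a • x + b • y) ≤ max (N x) (N y)` and `N (a • x) ≤ N x` for `|a| ≤ 1`: the balls are convex and
balanced. For the topology, `α n → 0` leaves only finitely many terms that are not uniformly small,
so `N` is continuous at `0`; conversely `N x < α n * r / (1 + r)` forces `ρ n x < r`. Hence
`𝓝 0 = comap N (𝓝 0)`, and translation gives the open sets.
-/

open Filter Topology

lemma div_one_add_lt_one {t : ℝ} (ht : 0 ≤ t) : t / (1 + t) < 1 := by
  rw [div_lt_one (by positivity)]; linarith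

lemma strictMonoOn_div_one_add : StrictMonoOn (fun t : ℝ => t / (1 + t)) (Set.Ici 0) := by
  intro s hs t ht hst
  simp only [Set.mem_Ici] at hs ht
  rw [div_lt_div_iff₀ (by positivity) (by positivity)]
  linarith

lemma div_one_add_le_div_one_add {s t : ℝ} (hs : 0 ≤ s) (hst : s ≤ t) :
    s / (1 + s) ≤ t / (1 + t) :=
  strictMonoOn_div_one_add.monotoneOn hs (Set.mem_Ici.2 (hs.trans hst)) hst

lemma lt_of_div_one_add_lt {s t : ℝ} (hs : 0 ≤ s) (ht : 0 ≤ t)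
    (h : s / (1 + s) < t / (1 + t)) : s < t :=
  (strictMonoOn_div_one_add.lt_iff_lt hs ht).1 h

lemma div_one_add_add_le {s t : ℝ} (hs : 0 ≤ s) (ht : 0 ≤ t) :
    (s + t) / (1 + (s + t)) ≤ s / (1 + s) + t / (1 + t) := by
  rw [div_add_div _ _ (by positivity) (by positivity),
    div_le_div_iff₀ (by positivity) (by positivity)]
  nlinarith [mul_nonneg hs ht, mul_nonneg (mul_nonneg hs ht) (add_nonneg hs ht)]

namespace SeminormFamily

variable {ι F : Type*} [AddCommGroup F] [Module ℝ F] {p : SeminormFamily ℝ F ι} {α : ι → ℝ}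

variable (p α) in
noncomputable def weightedSup (x : F) : ℝ :=
  ⨆ i, α i * (p i x / (1 + p i x))

lemma weightedSup_nonneg (hα : ∀ i, 0 ≤ α i) (x : F) : 0 ≤ p.weightedSup α x :=
  Real.iSup_nonneg fun i => mul_nonneg (hα i) (by positivity)

lemma le_weightedSup (hα : ∀ i, 0 ≤ α i) (hαb : BddAbove (Set.range α)) (i : ι) (x : F) :
    α i * (p i x / (1 + p i x)) ≤ p.weightedSup α x := by
  obtain ⟨C, hC⟩ := hαb
  refine le_ciSup (f := fun j => α j * (p j x / (1 + p j x)))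
    ⟨C, Set.forall_mem_range.2 fun j => ?_⟩ i
  calc α j * (p j x / (1 + p j x)) ≤ α j * 1 :=
        mul_le_mul_of_nonneg_left (div_one_add_lt_one (apply_nonneg _ _)).le (hα j)
    _ ≤ C := by simpa using hC (Set.mem_range_self j)

lemma weightedSup_le {x : F} {c : ℝ} (hc : 0 ≤ c)
    (h : ∀ i, α i * (p i x / (1 + p i x)) ≤ c) : p.weightedSup α x ≤ c :=
  Real.iSup_le h hc

@[simp]
lemma weightedSup_neg (x : F) : p.weightedSup α (-x) = p.weightedSup α x := by
  simp [weightedSup]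

lemma weightedSup_sub_comm (x y : F) : p.weightedSup α (x - y) = p.weightedSup α (y - x) := by
  rw [← neg_sub, weightedSup_neg]

lemma weightedSup_mono (hα : ∀ i, 0 ≤ α i) (hαb : BddAbove (Set.range α)) {x y : F}
    (h : ∀ i, p i x ≤ p i y) : p.weightedSup α x ≤ p.weightedSup α y :=
  weightedSup_le (weightedSup_nonneg hα y) fun i =>
    (mul_le_mul_of_nonneg_left (div_one_add_le_div_one_add (apply_nonneg _ _) (h i))
      (hα i)).trans (le_weightedSup hα hαb i y)

lemma weightedSup_add_le (hα : ∀ i, 0 ≤ α i) (hαb : BddAbove (Set.range α)) (x y : F) :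
    p.weightedSup α (x + y) ≤ p.weightedSup α x + p.weightedSup α y := by
  refine weightedSup_le (add_nonneg (weightedSup_nonneg hα x) (weightedSup_nonneg hα y))
    fun i => ?_
  have hx := apply_nonneg (p i) x
  have hy := apply_nonneg (p i) y
  calc α i * (p i (x + y) / (1 + p i (x + y)))
      ≤ α i * ((p i x + p i y) / (1 + (p i x + p i y))) :=
        mul_le_mul_of_nonneg_left (div_one_add_le_div_one_add (apply_nonneg _ _)
          (map_add_le_add _ _ _)) (hα i)
    _ ≤ α i * (p i x / (1 + p i x)) + α i * (p i y / (1 + p i y)) := by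
        rw [← mul_add]; exact mul_le_mul_of_nonneg_left (div_one_add_add_le hx hy) (hα i)
    _ ≤ p.weightedSup α x + p.weightedSup α y :=
        add_le_add (le_weightedSup hα hαb i x) (le_weightedSup hα hαb i y)

lemma weightedSup_sub_le (hα : ∀ i, 0 ≤ α i) (hαb : BddAbove (Set.range α)) (x y z : F) :
    p.weightedSup α (x - z) ≤ p.weightedSup α (x - y) + p.weightedSup α (y - z) := by
  simpa using weightedSup_add_le hα hαb (x - y) (y - z)

lemma weightedSup_eq_zero_iff (hα : ∀ i, 0 < α i) (hαb : BddAbove (Set.range α)) {x : F} :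
    p.weightedSup α x = 0 ↔ ∀ i, p i x = 0 := by
  refine ⟨fun h i => ?_, fun h => by simp [weightedSup, h]⟩
  have hterm := (le_weightedSup (fun j => (hα j).le) hαb i x).trans h.le
  have hx := apply_nonneg (p i) x
  have hquot : p i x / (1 + p i x) ≤ 0 := nonpos_of_mul_nonpos_right hterm (hα i)
  exact le_antisymm (by simpa using (div_le_iff₀ (by positivity)).1 hquot) hx

lemma weightedSup_smul_le (hα : ∀ i, 0 ≤ α i) (hαb : BddAbove (Set.range α)) {a : ℝ}
    (ha : ‖a‖ ≤ 1) (x : F) : p.weightedSup α (a • x) ≤ p.weightedSup α x :=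
  weightedSup_mono hα hαb fun i => by
    rw [map_smul_eq_mul]
    exact mul_le_of_le_one_left (apply_nonneg _ _) ha

lemma quasiconvexOn_weightedSup (hα : ∀ i, 0 ≤ α i) (hαb : BddAbove (Set.range α)) :
    QuasiconvexOn ℝ Set.univ (p.weightedSup α) := by
  refine quasiconvexOn_iff_le_max.2 ⟨convex_univ, fun x _ y _ a b ha hb hab => ?_⟩
  refine weightedSup_le ((weightedSup_nonneg hα x).trans (le_max_left _ _)) fun i => ?_
  have hseg : p i (a • x + b • y) ≤ max (p i x) (p i y) :=
    (p i).convexOn.le_on_segment' trivial trivial ha hb hab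
  have hmax : α i * (max (p i x) (p i y) / (1 + max (p i x) (p i y))) ≤
      max (p.weightedSup α x) (p.weightedSup α y) := by
    rcases max_choice (p i x) (p i y) with h | h <;> rw [h]
    · exact (le_weightedSup hα hαb i x).trans (le_max_left _ _)
    · exact (le_weightedSup hα hαb i y).trans (le_max_right _ _)
  exact (mul_le_mul_of_nonneg_left (div_one_add_le_div_one_add (apply_nonneg _ _) hseg)
    (hα i)).trans hmax

lemma convex_setOf_weightedSup_lt (hα : ∀ i, 0 ≤ α i) (hαb : BddAbove (Set.range α)) (ε : ℝ) :
    Convex ℝ {x | p.weightedSup α x < ε} := by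
  simpa only [Set.sep_univ] using (quasiconvexOn_weightedSup hα hαb).convex_lt ε

lemma balanced_setOf_weightedSup_lt (hα : ∀ i, 0 ≤ α i) (hαb : BddAbove (Set.range α)) (ε : ℝ) :
    Balanced ℝ {x | p.weightedSup α x < ε} :=
  balanced_iff_smul_mem.2 fun _ ha x hx => (weightedSup_smul_le hα hαb ha x).trans_lt hx

lemma tendsto_comap_weightedSup (hα : ∀ i, 0 ≤ α i) (hαb : BddAbove (Set.range α)) {i : ι}
    (hαi : 0 < α i) : Tendsto (p i) (comap (p.weightedSup α) (𝓝 0)) (𝓝 0) := by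
  refine tendsto_order.2 ⟨fun a ha => Eventually.of_forall fun x =>
    ha.trans_le (apply_nonneg _ _), fun r hr => ?_⟩
  have hsmall : ∀ᶠ x in comap (p.weightedSup α) (𝓝 0),
      p.weightedSup α x < α i * (r / (1 + r)) :=
    tendsto_comap.eventually (gt_mem_nhds (by positivity))
  filter_upwards [hsmall] with x hx
  refine lt_of_div_one_add_lt (apply_nonneg _ _) hr.le (lt_of_mul_lt_mul_left ?_ hαi.le)
  exact (le_weightedSup hα hαb i x).trans_lt hx

section Topology

variable [TopologicalSpace F]

lemma tendsto_weightedSup_nhds_zero (hp : ∀ i, Continuous (p i)) (hα : ∀ i, 0 ≤ α i)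
    (hα0 : Tendsto α cofinite (𝓝 0)) : Tendsto (p.weightedSup α) (𝓝 0) (𝓝 0) := by
  refine tendsto_order.2 ⟨fun a ha => Eventually.of_forall fun x =>
    ha.trans_le (weightedSup_nonneg hα x), fun ε hε => ?_⟩
  have hε2 := half_pos hε
  -- Only finitely many weights are at least `ε / 2`; near `0` their terms are small by continuity.
  have hfin : {i | ¬ α i < ε / 2}.Finite :=
    eventually_cofinite.1 (hα0.eventually (gt_mem_nhds hε2))
  have hnear : ∀ᶠ x in 𝓝 (0 : F), ∀ i ∈ {i | ¬ α i < ε / 2}, α i * p i x < ε / 2 :=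
    (eventually_all_finite hfin).2 fun i _ => by
      have : Tendsto (fun x => α i * p i x) (𝓝 0) (𝓝 0) := by
        simpa using ((hp i).tendsto 0).const_mul (α i)
      exact this.eventually (gt_mem_nhds hε2)
  filter_upwards [hnear] with x hx
  refine (weightedSup_le hε2.le fun i => ?_).trans_lt (half_lt_self hε)
  by_cases hi : α i < ε / 2
  · exact (mul_le_of_le_one_right (hα i) (div_one_add_lt_one (apply_nonneg _ _)).le).trans hi.le
  · exact (mul_le_mul_of_nonneg_left
      (div_le_self (apply_nonneg _ _) (le_add_of_nonneg_right (apply_nonneg _ _))) (hα i)).trans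
      (hx i hi).le

theorem _root_.WithSeminorms.nhds_zero_eq_comap_weightedSup (hp : WithSeminorms p)
    (hα : ∀ i, 0 < α i) (hα0 : Tendsto α cofinite (𝓝 0)) :
    𝓝 (0 : F) = comap (p.weightedSup α) (𝓝 0) := by
  have := hp.topologicalAddGroup
  have hα' : ∀ i, 0 ≤ α i := fun i => (hα i).le
  refine le_antisymm (tendsto_iff_comap.1
    (tendsto_weightedSup_nhds_zero hp.continuous_seminorm hα' hα0)) ?_
  rw [p.withSeminorms_iff_nhds_eq_iInf.1 hp]
  exact le_iInf fun i => tendsto_iff_comap.1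
    (tendsto_comap_weightedSup hα' hα0.bddAbove_range_of_cofinite (hα i))

theorem _root_.WithSeminorms.hasBasis_weightedSup_lt (hp : WithSeminorms p)
    (hα : ∀ i, 0 < α i) (hα0 : Tendsto α cofinite (𝓝 0)) :
    (𝓝 (0 : F)).HasBasis (fun ε : ℝ => 0 < ε) fun ε => {x | p.weightedSup α x < ε} := by
  rw [hp.nhds_zero_eq_comap_weightedSup hα hα0]
  convert Metric.nhds_basis_ball.comap (p.weightedSup α) using 2 with ε
  ext x
  simp [abs_of_nonneg (weightedSup_nonneg (fun i => (hα i).le) x)]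

theorem _root_.WithSeminorms.isOpen_iff_weightedSup (hp : WithSeminorms p)
    (hα : ∀ i, 0 < α i) (hα0 : Tendsto α cofinite (𝓝 0)) {s : Set F} :
    IsOpen s ↔ ∀ x ∈ s, ∃ ε > 0, {y | p.weightedSup α (x - y) < ε} ⊆ s := by
  have := hp.topologicalAddGroup
  have hbasis (x : F) : (𝓝 x).HasBasis (fun ε : ℝ => 0 < ε)
      fun ε => {y | p.weightedSup α (x - y) < ε} := by
    rw [← nhds_translation_sub x]
    simpa only [Set.preimage_ofPred_eq, weightedSup_sub_comm x] using
      (hp.hasBasis_weightedSup_lt hα hα0).comap (· - x)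
  simp only [isOpen_iff_mem_nhds, (hbasis _).mem_iff]

end Topology

end SeminormFamily

open SeminormFamily in
theorem sup_seminorm_metric_of_withSeminorms_general
    {F : Type*} [AddCommGroup F] [Module ℝ F] [UniformSpace F]
    (ρ : SeminormFamily ℝ F ℕ) (hρ : WithSeminorms ρ)
    (hsep : ∀ x : F, (∀ n : ℕ, ρ n x = 0) → x = 0)
    (α : ℕ → ℝ) (hαpos : ∀ n : ℕ, 0 < α n) (hα0 : Tendsto α atTop (𝓝 0))
    (d : F → F → ℝ)
    (hd : ∀ e f : F, d e f = ⨆ n : ℕ, α n * (ρ n (e - f) / (1 + ρ n (e - f)))) :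
    (∀ e f : F, 0 ≤ d e f) ∧
    (∀ e f : F, d e f = 0 ↔ e = f) ∧
    (∀ e f : F, d e f = d f e) ∧
    (∀ e f h : F, d e h ≤ d e f + d f h) ∧
    (∀ e f h : F, d (e + h) (f + h) = d e f) ∧
    (∀ s : Set F, IsOpen s ↔ ∀ x ∈ s, ∃ ε > 0, {y : F | d x y < ε} ⊆ s) ∧
    (∀ ε > 0, Convex ℝ {y : F | d y 0 < ε} ∧ Balanced ℝ {y : F | d y 0 < ε}) := by
  obtain rfl : d = fun e f => ρ.weightedSup α (e - f) := funext₂ hd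
  rw [← Nat.cofinite_eq_atTop] at hα0
  have hα : ∀ n, 0 ≤ α n := fun n => (hαpos n).le
  have hαb := hα0.bddAbove_range_of_cofinite
  refine ⟨fun e f => weightedSup_nonneg hα _, fun e f => ?_, weightedSup_sub_comm,
    weightedSup_sub_le hα hαb, fun e f h => by simp, fun s => hρ.isOpen_iff_weightedSup hαpos hα0,
    fun ε _ => ?_⟩
  · rw [weightedSup_eq_zero_iff hαpos hαb]
    exact ⟨fun h => sub_eq_zero.1 (hsep _ h), by rintro rfl; simp⟩
  · simp only [sub_zero]
    exact ⟨convex_setOf_weightedSup_lt hα hαb ε, balanced_setOf_weightedSup_lt hα hαb ε⟩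

/-- Let `F` be a real Fréchet space (complete metrizable locally convex
topological vector space) whose topology is generated by a countable separating family of
continuous seminorms `ρ`.  If `α n > 0` and `α n → 0`, then
`d e f = ⨆ n, α n * ρ n (e - f) / (1 + ρ n (e - f))` is a translation-invariant metric on `F`
which induces the original topology and has absolutely convex balls centered at the origin. -/
theorem sup_seminorm_metric_of_withSeminorms
    {F : Type*} [AddCommGroup F] [Module ℝ F] [UniformSpace F] [IsUniformAddGroup F]
    [ContinuousSMul ℝ F] [LocallyConvexSpace ℝ F] [CompleteSpace F]
    [TopologicalSpace.MetrizableSpace F]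
    (ρ : SeminormFamily ℝ F ℕ) (hρ : WithSeminorms ρ)
    (hsep : ∀ x : F, (∀ n : ℕ, ρ n x = 0) → x = 0)
    (α : ℕ → ℝ) (hαpos : ∀ n : ℕ, 0 < α n) (hα0 : Tendsto α atTop (𝓝 0))
    (d : F → F → ℝ)
    (hd : ∀ e f : F, d e f = ⨆ n : ℕ, α n * (ρ n (e - f) / (1 + ρ n (e - f)))) :
    (∀ e f : F, 0 ≤ d e f) ∧
    (∀ e f : F, d e f = 0 ↔ e = f) ∧
    (∀ e f : F, d e f = d f e) ∧
    (∀ e f h : F, d e h ≤ d e f + d f h) ∧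
    (∀ e f h : F, d (e + h) (f + h) = d e f) ∧
    (∀ s : Set F, IsOpen s ↔ ∀ x ∈ s, ∃ ε > 0, {y : F | d x y < ε} ⊆ s) ∧
    (∀ ε > 0, Convex ℝ {y : F | d y 0 < ε} ∧ Balanced ℝ {y : F | d y 0 < ε}) :=
  sup_seminorm_metric_of_withSeminorms_general ρ hρ hsep α hαpos hα0 d hd
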